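/- Recursive structure of cubic exponential sums at high prime powers: let char F_q > 3, F(x) = a_1 x_1^3 + … + a_n x_n^3 with a_i ∈ F_q^×, varpi a monic irreducible in F_q[t], e ≥ 4, and c ∈ F_q[t]^n with varpi | c (i.e., varpi divides every coordinate). Define S_{r}(c) = Σ'_{|a|<|r|} Σ_{|x|<|r|} ψ((aF(x) − c·x)/r) where Σ' restricts to gcd(a,r) = 1. Then S_{varpi^e}(c) = 0 if varpi^2 ∤ c, and S_{varpi^e}(c) = |varpi|^{3+2n} S_{varpi^{e−3}}(c/varpi^2) if varpi^2 | c. -/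

import Mathlib

open scoped Classical

noncomputable section

/-- `K_∞ = F_q((t⁻¹))`, modelled as formal Laurent series in the variable `X = t⁻¹`. -/
abbrev Kinf (Fq : Type*) [Field Fq] := LaurentSeries Fq

/-- The element `t ∈ K_∞` (the inverse of the Laurent-series variable `X = t⁻¹`). -/
def tElem (Fq : Type*) [Field Fq] : Kinf Fq := (HahnSeries.single (1 : ℤ) (1 : Fq))⁻¹

/-- The natural embedding `F_q[t] → K_∞`, sending `t` to `tElem`. -/
def iota (Fq : Type*) [Field Fq] : Polynomial Fq →+* Kinf Fq :=
  Polynomial.eval₂RingHom HahnSeries.C (tElem Fq)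

/-- The absolute value `|α| = q^{deg α}` on `K_∞ = F_q((t⁻¹))`: if
`α = Σ_{i ≤ M} a_i t^i` with `a_M ≠ 0`, i.e. `α` has `X`-adic order `-M`, then
`|α| = q^M = q^{-ord(α)}`; and `|0| = 0`. -/
def absv (Fq : Type*) [Field Fq] [Fintype Fq] (α : Kinf Fq) : ℝ :=
  if α = 0 then 0 else (Fintype.card Fq : ℝ) ^ (-(HahnSeries.order α))

/-- `|x| = q^{deg x}` on `F_q[t]`, with `|0| = 0`. -/
def polyAbs (Fq : Type*) [Field Fq] [Fintype Fq] (x : Polynomial Fq) : ℝ :=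
  if x = 0 then 0 else (Fintype.card Fq : ℝ) ^ x.natDegree

/-- The standard additive character `ψ` of `K_∞`:
`ψ(α) = e(Tr_{F_q/F_p}(a₋₁)/p)` where `a₋₁` is the coefficient of `t⁻¹` (i.e. of `X¹`). -/
def psiChar (Fq : Type*) [Field Fq] [Fintype Fq] (α : Kinf Fq) : ℂ :=
  haveI : CharP Fq (ringChar Fq) := ringChar.charP Fq
  letI : Algebra (ZMod (ringChar Fq)) Fq := ZMod.algebra _ _
  Complex.exp (2 * Real.pi * Complex.I *
    ((Algebra.trace (ZMod (ringChar Fq)) Fq (α.coeff (1 : ℤ))).val : ℂ) / (ringChar Fq : ℂ))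

/-- The exponential sum `S_r(c) = Σ'_{|a|<|r|} Σ_{|x|<|r|} ψ((aF(x) - c·x)/r)` attached to
the diagonal cubic form `F(x) = Σ aᵢxᵢ³` (where `Σ'` restricts to `gcd(a,r) = 1`). -/
def Ssum (Fq : Type*) [Field Fq] [Fintype Fq] (n : ℕ) (coeffs : Fin n → Fq)
    (r : Polynomial Fq) (c : Fin n → Polynomial Fq) : ℂ :=
  ∑ᶠ a ∈ {a : Polynomial Fq | a.degree < r.degree ∧ IsCoprime a r},
    ∑ᶠ x ∈ {x : Fin n → Polynomial Fq | ∀ i, (x i).degree < r.degree},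
      psiChar Fq (iota Fq
        (a * (∑ i, Polynomial.C (coeffs i) * (x i) ^ 3) - ∑ i, (c i) * (x i)) / iota Fq r)

section Dev
set_option linter.unusedSectionVars false
variable {Fq : Type*} [Field Fq] [Fintype Fq]

lemma hahn_coeff_sum {ι : Type*} (s : Finset ι) (F : ι → Kinf Fq) (m : ℤ) :
    (∑ j ∈ s, F j).coeff m = ∑ j ∈ s, (F j).coeff m :=
  map_sum (HahnSeries.coeff.addMonoidHom m) F s

lemma tElem_eq : tElem Fq = HahnSeries.single (-1 : ℤ) (1 : Fq) := by
  rw [tElem]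
  refine inv_eq_of_mul_eq_one_right ?_
  rw [HahnSeries.single_mul_single, add_neg_cancel, one_mul, HahnSeries.single_zero_one]

lemma iota_apply (f : Polynomial Fq) :
    iota Fq f = ∑ k ∈ f.support, HahnSeries.single (-(k : ℤ)) (f.coeff k) := by
  rw [iota, Polynomial.coe_eval₂RingHom, Polynomial.eval₂_eq_sum, Polynomial.sum]
  refine Finset.sum_congr rfl fun k hk => ?_
  rw [tElem_eq, HahnSeries.single_pow, one_pow]
  rw [show (HahnSeries.C (f.coeff k) : Kinf Fq) = HahnSeries.single 0 (f.coeff k) from rfl,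
    HahnSeries.single_mul_single, zero_add]
  norm_num

lemma iota_coeff_neg (f : Polynomial Fq) (k : ℕ) :
    (iota Fq f).coeff (-(k : ℤ)) = f.coeff k := by
  rw [iota_apply, hahn_coeff_sum]
  rw [Finset.sum_eq_single k]
  · rw [HahnSeries.coeff_single_same]
  · intro b _ hb
    rw [HahnSeries.coeff_single_of_ne]
    simpa using fun h => hb (by exact_mod_cast h.symm)
  · intro hk
    rw [Polynomial.notMem_support_iff.mp hk, HahnSeries.coeff_single]
    simp

lemma iota_coeff_pos (f : Polynomial Fq) (m : ℤ) (hm : 0 < m) :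
    (iota Fq f).coeff m = 0 := by
  rw [iota_apply, hahn_coeff_sum]
  refine Finset.sum_eq_zero fun j _ => ?_
  rw [HahnSeries.coeff_single_of_ne]
  omega

lemma iota_ne_zero {f : Polynomial Fq} (hf : f ≠ 0) : iota Fq f ≠ 0 := by
  intro h
  refine hf (Polynomial.ext fun k => ?_)
  have := iota_coeff_neg f k
  rw [h, HahnSeries.coeff_zero] at this
  rw [← this, Polynomial.coeff_zero]

lemma iota_order {f : Polynomial Fq} (hf : f ≠ 0) :
    (iota Fq f).order = -(f.natDegree : ℤ) := by
  have h1 : (iota Fq f).coeff (-(f.natDegree : ℤ)) ≠ 0 := by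
    rw [iota_coeff_neg]
    exact Polynomial.leadingCoeff_ne_zero.mpr hf
  refine le_antisymm (HahnSeries.order_le_of_coeff_ne_zero h1) ?_
  have h2 := HahnSeries.coeff_order_eq_zero.not.mpr (iota_ne_zero hf)
  by_contra hlt
  push_neg at hlt
  rcases lt_or_ge 0 ((iota Fq f).order) with h | h
  · exact h2 (iota_coeff_pos f _ h)
  · set m := (iota Fq f).order
    have hm : m = -(((-m).toNat : ℕ) : ℤ) := by omega
    rw [hm, iota_coeff_neg] at h2
    have := Polynomial.le_natDegree_of_ne_zero h2
    omega


def trQ (x : Fq) : ZMod (ringChar Fq) :=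
  letI : Algebra (ZMod (ringChar Fq)) Fq := ZMod.algebra _ _
  Algebra.trace (ZMod (ringChar Fq)) Fq x

lemma psiChar_eq (α : Kinf Fq) : psiChar Fq α =
    Complex.exp (2 * Real.pi * Complex.I *
      ((trQ (α.coeff (1 : ℤ))).val : ℂ) / (ringChar Fq : ℂ)) := rfl

lemma trQ_add (x y : Fq) : trQ (x + y) = trQ x + trQ y := by
  unfold trQ; exact map_add _ x y

lemma trQ_zero : trQ (0 : Fq) = 0 := by
  unfold trQ; exact map_zero _

lemma exp_val_add {p : ℕ} (hp : p ≠ 0) (a b : ZMod p) :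
    Complex.exp (2 * Real.pi * Complex.I * (((a + b).val : ℕ) : ℂ) / p) =
      Complex.exp (2 * Real.pi * Complex.I * ((a.val : ℕ) : ℂ) / p) *
      Complex.exp (2 * Real.pi * Complex.I * ((b.val : ℕ) : ℂ) / p) := by
  haveI : NeZero p := ⟨hp⟩
  have hmd := Nat.mod_add_div (a.val + b.val) p
  set k := (a.val + b.val) / p with hk
  have hv : (a + b).val = a.val + b.val - p * k := by
    rw [ZMod.val_add]; omega
  have hle : p * k ≤ a.val + b.val := by omega
  have hc : (((a + b).val : ℕ) : ℂ) = (a.val : ℂ) + (b.val : ℂ) - (p : ℂ) * (k : ℂ) := by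
    rw [hv]; push_cast [hle]; ring
  have hpc : (p : ℂ) ≠ 0 := Nat.cast_ne_zero.mpr hp
  rw [hc, ← Complex.exp_add]
  rw [show 2 * Real.pi * Complex.I * ((a.val : ℂ) + (b.val : ℂ) - (p : ℂ) * k) / p =
      (2 * Real.pi * Complex.I * (a.val : ℂ) / p + 2 * Real.pi * Complex.I * (b.val : ℂ) / p)
        - (k : ℤ) * (2 * Real.pi * Complex.I) from by
    field_simp; push_cast; ring]
  rw [Complex.exp_sub, Complex.exp_int_mul_two_pi_mul_I, div_one]

lemma psiChar_add (hp : ringChar Fq ≠ 0) (α β : Kinf Fq) :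
    psiChar Fq (α + β) = psiChar Fq α * psiChar Fq β := by
  rw [psiChar_eq, psiChar_eq, psiChar_eq, HahnSeries.coeff_add, trQ_add]
  exact exp_val_add hp _ _

lemma psiChar_eq_one_of_coeff_zero (α : Kinf Fq) (h : α.coeff 1 = 0) :
    psiChar Fq α = 1 := by
  rw [psiChar_eq, h, trQ_zero]
  simp [ZMod.val_zero]

lemma psiChar_iota (f : Polynomial Fq) : psiChar Fq (iota Fq f) = 1 :=
  psiChar_eq_one_of_coeff_zero _ (iota_coeff_pos f 1 one_pos)

lemma psiChar_add_iota (hp : ringChar Fq ≠ 0) (α : Kinf Fq) (f : Polynomial Fq) :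
    psiChar Fq (α + iota Fq f) = psiChar Fq α := by
  rw [psiChar_add hp, psiChar_iota, mul_one]

lemma psiChar_sum (hp : ringChar Fq ≠ 0) {ι : Type*} (s : Finset ι) (g : ι → Kinf Fq) :
    psiChar Fq (∑ i ∈ s, g i) = ∏ i ∈ s, psiChar Fq (g i) := by
  classical
  induction s using Finset.induction_on with
  | empty => simpa using psiChar_eq_one_of_coeff_zero 0 (by simp)
  | insert _ _ hx ih =>
    rw [Finset.sum_insert hx, Finset.prod_insert hx, psiChar_add hp, ih]


lemma psiChar_div_congr (hp : ringChar Fq ≠ 0) {r f g : Polynomial Fq} (hr : r ≠ 0)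
    (h : r ∣ (f - g)) :
    psiChar Fq (iota Fq f / iota Fq r) = psiChar Fq (iota Fq g / iota Fq r) := by
  obtain ⟨h₁, hh⟩ := h
  have hr' : iota Fq r ≠ 0 := iota_ne_zero hr
  have key : iota Fq f / iota Fq r = iota Fq g / iota Fq r + iota Fq h₁ := by
    have hf : f = g + r * h₁ := by linear_combination hh
    rw [hf, map_add, map_mul, add_div]
    congr 1
    exact mul_div_cancel_left₀ _ hr'
  rw [key, psiChar_add_iota hp]

/-- coefficient of `t⁻¹` in `z/ϖ` for `deg z < deg ϖ` is the coefficient of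
`t^{d-1}` in `z`. -/
lemma coeff_one_div {ϖ : Polynomial Fq} (hϖm : ϖ.Monic) (hd : 1 ≤ ϖ.natDegree)
    (z : Polynomial Fq) (hz : z.degree < ϖ.degree) :
    ((iota Fq z) / (iota Fq ϖ)).coeff 1 = z.coeff (ϖ.natDegree - 1) := by
  rcases eq_or_ne z 0 with rfl | hz0
  · simp
  set d := ϖ.natDegree with hdd
  have hϖ0 : ϖ ≠ 0 := hϖm.ne_zero
  have hι : iota Fq ϖ ≠ 0 := iota_ne_zero hϖ0
  set β := iota Fq z / iota Fq ϖ with hβ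
  have hβϖ : β * iota Fq ϖ = iota Fq z := div_mul_cancel₀ _ hι
  have hβ0 : β ≠ 0 := by
    intro h; rw [h, zero_mul] at hβϖ; exact iota_ne_zero hz0 hβϖ.symm
  have hnz : z.natDegree < d := Polynomial.natDegree_lt_natDegree hz0 hz
  have hordϖ : (iota Fq ϖ).order = -(d : ℤ) := iota_order hϖ0
  have hordz : (iota Fq z).order = -(z.natDegree : ℤ) := iota_order hz0
  have hordβ : (1 : ℤ) ≤ β.order := by
    have := HahnSeries.order_mul hβ0 hι
    rw [hβϖ, hordϖ, hordz] at this
    omega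
  -- compute coefficient of iota z at -(d-1)
  have hcz : (iota Fq z).coeff (-((d-1 : ℕ) : ℤ)) = z.coeff (d - 1) := iota_coeff_neg z (d-1)
  rw [← hβϖ] at hcz
  rw [HahnSeries.coeff_mul] at hcz
  rw [Finset.sum_eq_single ((1 : ℤ), (-(d:ℤ)))] at hcz
  · have hϖd : (iota Fq ϖ).coeff (-(d:ℤ)) = 1 := by
      rw [iota_coeff_neg]; exact hϖm
    rw [hϖd, mul_one] at hcz
    exact hcz
  · rintro ⟨i, j⟩ hmem hne
    rw [Finset.mem_addAntidiagonal] at hmem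
    obtain ⟨hi, hj, hij⟩ := hmem
    exfalso
    have hi' : (1:ℤ) ≤ i := le_trans hordβ (HahnSeries.order_le_of_coeff_ne_zero hi)
    have hj' : -(d:ℤ) ≤ j := by
      have hj0 : (iota Fq ϖ).coeff j ≠ 0 := hj
      by_contra hlt
      push_neg at hlt
      rw [← hordϖ] at hlt
      exact hj0 (HahnSeries.coeff_eq_zero_of_lt_order hlt)
    have : i = 1 ∧ j = -(d:ℤ) := by
      constructor <;> [skip; skip] <;> omega
    exact hne (Prod.ext this.1 this.2)
  · intro hnmem
    have hϖd : (iota Fq ϖ).coeff (-(d:ℤ)) = 1 := by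
      rw [iota_coeff_neg]; exact hϖm
    by_cases hb1 : β.coeff 1 = 0
    · rw [hb1, zero_mul]
    · exfalso
      apply hnmem
      rw [Finset.mem_addAntidiagonal]
      refine ⟨hb1, by rw [HahnSeries.mem_support, hϖd]; exact one_ne_zero, by push_cast; omega⟩


def Pfin (Fq : Type*) [Field Fq] [Fintype Fq] (N : ℕ) : Finset (Polynomial Fq) :=
  (Finset.univ : Finset (Fin N → Fq)).image
    (fun v => ∑ i : Fin N, Polynomial.C (v i) * Polynomial.X ^ (i : ℕ))

lemma coeff_sum_C_mul_X_pow (N : ℕ) (v : Fin N → Fq) (j : ℕ) :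
    (∑ i : Fin N, Polynomial.C (v i) * Polynomial.X ^ (i : ℕ)).coeff j =
      if h : j < N then v ⟨j, h⟩ else 0 := by
  rw [Polynomial.finset_sum_coeff]
  simp only [Polynomial.coeff_C_mul, Polynomial.coeff_X_pow, mul_ite, mul_one, mul_zero]
  by_cases h : j < N
  · rw [Finset.sum_eq_single (⟨j, h⟩ : Fin N)]
    · simp [h]
    · intro b _ hb
      have : j ≠ (b : ℕ) := fun hc => hb (by ext; simp [hc.symm])
      simp [this]
    · simp
  · rw [dif_neg h]
    refine Finset.sum_eq_zero fun i _ => ?_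
    have : j ≠ (i : ℕ) := by omega
    simp [this]

lemma mem_Pfin {N : ℕ} {x : Polynomial Fq} : x ∈ Pfin Fq N ↔ x.degree < (N : ℕ) := by
  constructor
  · rintro hx
    rw [Pfin, Finset.mem_image] at hx
    obtain ⟨v, -, rfl⟩ := hx
    refine lt_of_le_of_lt (Polynomial.degree_sum_le _ _) ?_
    rw [Finset.sup_lt_iff (by exact_mod_cast WithBot.bot_lt_coe N)]
    intro i _
    refine lt_of_le_of_lt (Polynomial.degree_C_mul_X_pow_le _ _) ?_
    exact_mod_cast i.isLt
  · intro hx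
    rw [Pfin, Finset.mem_image]
    refine ⟨fun i => x.coeff (i : ℕ), Finset.mem_univ _, ?_⟩
    refine Polynomial.ext fun j => ?_
    rw [coeff_sum_C_mul_X_pow]
    split_ifs with h
    · rfl
    · exact (Polynomial.coeff_eq_zero_of_degree_lt
        (lt_of_lt_of_le hx (by exact_mod_cast not_lt.mp h))).symm

lemma sum_inj (N : ℕ) : Function.Injective
    (fun v : Fin N → Fq => ∑ i : Fin N, Polynomial.C (v i) * Polynomial.X ^ (i : ℕ)) := by
  intro v w h
  funext i
  have h1 := congrArg (fun p => Polynomial.coeff p (i : ℕ)) h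
  simp only [coeff_sum_C_mul_X_pow, dif_pos i.isLt] at h1
  simpa using h1

lemma card_Pfin (N : ℕ) : (Pfin Fq N).card = Fintype.card Fq ^ N := by
  rw [Pfin, Finset.card_image_of_injective _ (sum_inj N), Finset.card_univ,
    Fintype.card_fun, Fintype.card_fin]

lemma zero_mem_Pfin (N : ℕ) : (0 : Polynomial Fq) ∈ Pfin Fq N := by
  rw [mem_Pfin, Polynomial.degree_zero]
  exact_mod_cast WithBot.bot_lt_coe N

lemma add_mem_Pfin {N : ℕ} {x y : Polynomial Fq} (hx : x ∈ Pfin Fq N) (hy : y ∈ Pfin Fq N) :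
    x + y ∈ Pfin Fq N := by
  rw [mem_Pfin] at *
  exact lt_of_le_of_lt (Polynomial.degree_add_le x y) (max_lt hx hy)

lemma neg_mem_Pfin {N : ℕ} {x : Polynomial Fq} (hx : x ∈ Pfin Fq N) :
    -x ∈ Pfin Fq N := by
  rw [mem_Pfin] at *
  simpa using hx


lemma sub_mem_Pfin {N : ℕ} {x y : Polynomial Fq} (hx : x ∈ Pfin Fq N) (hy : y ∈ Pfin Fq N) :
    x - y ∈ Pfin Fq N := by
  rw [sub_eq_add_neg]; exact add_mem_Pfin hx (neg_mem_Pfin hy)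

lemma exists_psi_ne_one {ϖ : Polynomial Fq} (hϖm : ϖ.Monic) (hϖi : Irreducible ϖ)
    {b : Polynomial Fq} (hb : ¬ ϖ ∣ b) :
    ∃ y ∈ Pfin Fq ϖ.natDegree, psiChar Fq (iota Fq (b * y) / iota Fq ϖ) ≠ 1 := by
  haveI := ringChar.charP Fq
  have hprime : (ringChar Fq).Prime := CharP.char_is_prime Fq _
  have hp0 : ringChar Fq ≠ 0 := hprime.ne_zero
  haveI : NeZero (ringChar Fq) := ⟨hp0⟩
  obtain ⟨α0, hα0⟩ : ∃ x : Fq, trQ x ≠ 0 := by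
    letI : Algebra (ZMod (ringChar Fq)) Fq := ZMod.algebra _ _
    obtain ⟨bb, hbb⟩ := FiniteField.trace_to_zmod_nondegenerate Fq (one_ne_zero (α := Fq))
    exact ⟨1 * bb, by unfold trQ; exact hbb⟩
  have hα0' : α0 ≠ 0 := fun h => hα0 (by rw [h]; exact trQ_zero)
  set d := ϖ.natDegree with hdd
  have hd : 1 ≤ d := hϖi.natDegree_pos
  have hϖ0 : ϖ ≠ 0 := hϖm.ne_zero
  have hcop : IsCoprime ϖ b := hϖi.coprime_iff_not_dvd.mpr hb
  obtain ⟨uu, vv, huv⟩ := hcop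
  set z : Polynomial Fq := Polynomial.C α0 * Polynomial.X ^ (d - 1) with hz
  have hzdeg : z.degree < ϖ.degree := by
    rw [hz, Polynomial.degree_C_mul_X_pow _ hα0', Polynomial.degree_eq_natDegree hϖ0]
    exact_mod_cast Nat.sub_lt_of_pos_le Nat.one_pos hd
  set y : Polynomial Fq := (vv * z) %ₘ ϖ with hy
  have hymem : y ∈ Pfin Fq d := by
    rw [mem_Pfin]
    have := Polynomial.degree_modByMonic_lt (vv * z) hϖm
    rwa [Polynomial.degree_eq_natDegree hϖ0] at this
  refine ⟨y, hymem, ?_⟩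
  have hmd := Polynomial.modByMonic_add_div (vv * z) ϖ
  have hcong : ϖ ∣ (b * y - z) := by
    refine ⟨-(uu * z) - b * ((vv * z) /ₘ ϖ), ?_⟩
    have huv' : uu * ϖ + vv * b = 1 := huv
    linear_combination b * hmd + z * huv'
  rw [psiChar_div_congr hp0 hϖ0 hcong, psiChar_eq, coeff_one_div hϖm hd z hzdeg]
  have hzc : z.coeff (d - 1) = α0 := by
    rw [hz, Polynomial.coeff_C_mul, Polynomial.coeff_X_pow, if_pos rfl, mul_one]
  rw [hzc]
  intro heq
  rw [Complex.exp_eq_one_iff] at heq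
  obtain ⟨m, hm⟩ := heq
  set v := (trQ α0).val with hv
  have hvne : v ≠ 0 := fun h => hα0 ((ZMod.val_eq_zero _).mp h)
  have hvlt : v < ringChar Fq := ZMod.val_lt _
  have hπ : (2 * (Real.pi : ℂ) * Complex.I) ≠ 0 := by
    simp [Real.pi_ne_zero, Complex.I_ne_zero]
  have hpc : ((ringChar Fq : ℕ) : ℂ) ≠ 0 := Nat.cast_ne_zero.mpr hp0
  have hvc : ((v : ℕ) : ℂ) = m * ((ringChar Fq : ℕ) : ℂ) := by
    field_simp at hm
    have h2 : 2 * (Real.pi : ℂ) * Complex.I * (v : ℂ) =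
        2 * (Real.pi : ℂ) * Complex.I * (m * ((ringChar Fq : ℕ) : ℂ)) := by
      linear_combination (2 * (Real.pi : ℂ) * Complex.I) * hm
    exact mul_left_cancel₀ hπ h2
  have hdvd : ((ringChar Fq : ℕ) : ℤ) ∣ (v : ℤ) := ⟨m, by exact_mod_cast hvc.trans (mul_comm _ _)⟩
  have : (ringChar Fq) ∣ v := Int.ofNat_dvd.mp hdvd
  exact hvne (Nat.eq_zero_of_dvd_of_lt this hvlt)

lemma ortho {ϖ : Polynomial Fq} (hϖm : ϖ.Monic) (hϖi : Irreducible ϖ) (b : Polynomial Fq) :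
    ∑ y ∈ Pfin Fq ϖ.natDegree, psiChar Fq (iota Fq (b * y) / iota Fq ϖ) =
      if ϖ ∣ b then ((Fintype.card Fq : ℂ)) ^ ϖ.natDegree else 0 := by
  haveI := ringChar.charP Fq
  have hp0 : ringChar Fq ≠ 0 := (CharP.char_is_prime Fq _).ne_zero
  have hϖ0 : ϖ ≠ 0 := hϖm.ne_zero
  have hι : iota Fq ϖ ≠ 0 := iota_ne_zero hϖ0
  by_cases hb : ϖ ∣ b
  · rw [if_pos hb]
    obtain ⟨b', rfl⟩ := hb
    have h1 : ∀ y ∈ Pfin Fq ϖ.natDegree,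
        psiChar Fq (iota Fq (ϖ * b' * y) / iota Fq ϖ) = 1 := by
      intro y _
      rw [mul_assoc, map_mul, mul_div_cancel_left₀ _ hι, psiChar_iota]
    rw [Finset.sum_congr rfl h1, Finset.sum_const, card_Pfin]
    simp
  · rw [if_neg hb]
    obtain ⟨y₀, hy₀mem, hy₀⟩ := exists_psi_ne_one hϖm hϖi hb
    have h2 : ∀ y ∈ Pfin Fq ϖ.natDegree,
        psiChar Fq (iota Fq (b * (y + y₀)) / iota Fq ϖ) =
        psiChar Fq (iota Fq (b * y₀) / iota Fq ϖ) *
          psiChar Fq (iota Fq (b * y) / iota Fq ϖ) := by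
      intro y _
      have h3 : iota Fq (b * (y + y₀)) / iota Fq ϖ =
          iota Fq (b * y) / iota Fq ϖ + iota Fq (b * y₀) / iota Fq ϖ := by
        rw [← add_div, ← map_add, mul_add]
      rw [h3, psiChar_add hp0, mul_comm]
    have hshift : (∑ y ∈ Pfin Fq ϖ.natDegree, psiChar Fq (iota Fq (b * y) / iota Fq ϖ))
        = psiChar Fq (iota Fq (b * y₀) / iota Fq ϖ) *
          ∑ y ∈ Pfin Fq ϖ.natDegree, psiChar Fq (iota Fq (b * y) / iota Fq ϖ) := by
      calc (∑ y ∈ Pfin Fq ϖ.natDegree, psiChar Fq (iota Fq (b * y) / iota Fq ϖ))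
          = ∑ y ∈ Pfin Fq ϖ.natDegree, psiChar Fq (iota Fq (b * (y + y₀)) / iota Fq ϖ) := by
            refine Finset.sum_nbij' (fun y => y - y₀) (fun y => y + y₀) ?_ ?_ ?_ ?_ ?_
            · exact fun a ha => sub_mem_Pfin ha hy₀mem
            · exact fun a ha => add_mem_Pfin ha hy₀mem
            · intro a _; ring
            · intro a _; ring
            · intro a _; rw [sub_add_cancel]
        _ = ∑ y ∈ Pfin Fq ϖ.natDegree, psiChar Fq (iota Fq (b * y₀) / iota Fq ϖ) *
              psiChar Fq (iota Fq (b * y) / iota Fq ϖ) := Finset.sum_congr rfl h2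
        _ = _ := (Finset.mul_sum _ _ _).symm
    have hz : (psiChar Fq (iota Fq (b * y₀) / iota Fq ϖ) - 1) *
        (∑ y ∈ Pfin Fq ϖ.natDegree, psiChar Fq (iota Fq (b * y) / iota Fq ϖ)) = 0 := by
      linear_combination -hshift
    exact (mul_eq_zero.mp hz).resolve_left (sub_ne_zero_of_ne hy₀)


abbrev PXfin (Fq : Type*) [Field Fq] [Fintype Fq] (n N : ℕ) : Finset (Fin n → Polynomial Fq) :=
  Fintype.piFinset (fun _ => Pfin Fq N)

lemma mem_PXfin {n N : ℕ} {x : Fin n → Polynomial Fq} :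
    x ∈ PXfin Fq n N ↔ ∀ i, (x i).degree < (N : ℕ) := by
  rw [Fintype.mem_piFinset]
  exact forall_congr' fun i => mem_Pfin

section Split
variable {h : Polynomial Fq} (hm : h.Monic) {M D : ℕ} (hM : h.natDegree = M)

include hm hM

lemma split_mem1 {x : Polynomial Fq} (hx : x ∈ Pfin Fq (M + D)) :
    x %ₘ h ∈ Pfin Fq M ∧ x /ₘ h ∈ Pfin Fq D := by
  have h0 : h ≠ 0 := hm.ne_zero
  have hdeg : h.degree = (M : ℕ) := by rw [Polynomial.degree_eq_natDegree h0, hM]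
  constructor
  · rw [mem_Pfin, ← hdeg]
    exact Polynomial.degree_modByMonic_lt x hm
  · rw [mem_Pfin]
    by_cases hz : x /ₘ h = 0
    · rw [hz, Polynomial.degree_zero]
      exact_mod_cast WithBot.bot_lt_coe D
    · have hx0 : x ≠ 0 := by
        intro hx0; rw [hx0, Polynomial.zero_divByMonic] at hz; exact hz rfl
      have hxlt : x.natDegree < M + D := by
        have := (mem_Pfin.mp hx)
        rwa [Polynomial.degree_eq_natDegree hx0, Nat.cast_lt] at this
      have hge : ¬ x.degree < h.degree := by
        rw [← Polynomial.divByMonic_eq_zero_iff hm]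
        exact hz
      have hMle : M ≤ x.natDegree := by
        rw [hdeg, Polynomial.degree_eq_natDegree hx0, Nat.cast_lt] at hge
        omega
      have hnd := Polynomial.natDegree_divByMonic x hm
      calc (x /ₘ h).degree ≤ ((x /ₘ h).natDegree : ℕ) := Polynomial.degree_le_natDegree
        _ < (D : ℕ) := by rw [hnd, hM]; exact_mod_cast by omega

lemma split_mem2 {u v : Polynomial Fq} (hu : u ∈ Pfin Fq M) (hv : v ∈ Pfin Fq D) :
    u + h * v ∈ Pfin Fq (M + D) := by
  have h0 : h ≠ 0 := hm.ne_zero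
  rw [mem_Pfin] at *
  refine lt_of_le_of_lt (Polynomial.degree_add_le _ _) (max_lt ?_ ?_)
  · exact lt_of_lt_of_le hu (by exact_mod_cast Nat.le_add_right M D)
  · rcases eq_or_ne v 0 with rfl | hv0
    · rw [mul_zero, Polynomial.degree_zero]
      exact_mod_cast WithBot.bot_lt_coe _
    · rw [Polynomial.degree_mul, Polynomial.degree_eq_natDegree h0, hM,
        Polynomial.degree_eq_natDegree hv0]
      rw [Polynomial.degree_eq_natDegree hv0, Nat.cast_lt] at hv
      exact_mod_cast by omega

lemma split_rt {u v : Polynomial Fq} (hu : u ∈ Pfin Fq M) :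
    (u + h * v) %ₘ h = u ∧ (u + h * v) /ₘ h = v := by
  have h0 : h ≠ 0 := hm.ne_zero
  have hdeg : h.degree = (M : ℕ) := by rw [Polynomial.degree_eq_natDegree h0, hM]
  have hmod : (u + h * v) %ₘ h = u := by
    rw [Polynomial.add_modByMonic]
    rw [(Polynomial.modByMonic_eq_self_iff hm).mpr (by rw [hdeg]; exact mem_Pfin.mp hu)]
    rw [(Polynomial.modByMonic_eq_zero_iff_dvd hm).mpr ⟨v, rfl⟩, add_zero]
  refine ⟨hmod, ?_⟩
  have e1 := Polynomial.modByMonic_add_div (u + h * v) h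
  rw [hmod] at e1
  have : h * ((u + h * v) /ₘ h) = h * v := by linear_combination e1
  exact mul_left_cancel₀ h0 this

lemma sum_split (g : Polynomial Fq → ℂ) :
    ∑ x ∈ Pfin Fq (M + D), g x = ∑ u ∈ Pfin Fq M, ∑ v ∈ Pfin Fq D, g (u + h * v) := by
  rw [← Finset.sum_product']
  refine Finset.sum_nbij' (fun x => (x %ₘ h, x /ₘ h)) (fun p => p.1 + h * p.2) ?_ ?_ ?_ ?_ ?_
  · intro x hx
    rw [Finset.mem_product]
    exact split_mem1 hm hM hx
  · intro p hp
    rw [Finset.mem_product] at hp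
    exact split_mem2 hm hM hp.1 hp.2
  · intro x _
    exact Polynomial.modByMonic_add_div x h
  · intro p hp
    rw [Finset.mem_product] at hp
    obtain ⟨h1, h2⟩ := split_rt hm hM (v := p.2) hp.1
    exact Prod.ext h1 h2
  · intro x hx
    rw [Polynomial.modByMonic_add_div x h]

lemma sum_split_pi (n : ℕ) (g : (Fin n → Polynomial Fq) → ℂ) :
    ∑ x ∈ PXfin Fq n (M + D), g x =
      ∑ u ∈ PXfin Fq n M, ∑ v ∈ PXfin Fq n D, g (fun i => u i + h * v i) := by
  rw [← Finset.sum_product']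
  refine Finset.sum_nbij' (fun x => (fun i => x i %ₘ h, fun i => x i /ₘ h))
    (fun p => fun i => p.1 i + h * p.2 i) ?_ ?_ ?_ ?_ ?_
  · intro x hx
    rw [Finset.mem_product, Fintype.mem_piFinset, Fintype.mem_piFinset]
    rw [Fintype.mem_piFinset] at hx
    exact ⟨fun i => (split_mem1 hm hM (hx i)).1, fun i => (split_mem1 hm hM (hx i)).2⟩
  · intro p hp
    rw [Finset.mem_product, Fintype.mem_piFinset, Fintype.mem_piFinset] at hp
    rw [Fintype.mem_piFinset]
    exact fun i => split_mem2 hm hM (hp.1 i) (hp.2 i)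
  · intro x _
    funext i
    exact Polynomial.modByMonic_add_div (x i) h
  · intro p hp
    rw [Finset.mem_product, Fintype.mem_piFinset, Fintype.mem_piFinset] at hp
    have := fun i => split_rt hm hM (v := p.2 i) (hp.1 i)
    exact Prod.ext (funext fun i => (this i).1) (funext fun i => (this i).2)
  · intro x hx
    congr 1
    funext i
    exact (Polynomial.modByMonic_add_div (x i) h).symm

end Split


lemma Ssum_eq_finset (n : ℕ) (coeffs : Fin n → Fq) (r : Polynomial Fq) (hr0 : r ≠ 0)
    (c : Fin n → Polynomial Fq) :
    Ssum Fq n coeffs r c =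
      ∑ a ∈ (Pfin Fq r.natDegree).filter (fun a => IsCoprime a r),
        ∑ x ∈ PXfin Fq n r.natDegree,
          psiChar Fq (iota Fq (a * (∑ i, Polynomial.C (coeffs i) * (x i) ^ 3)
            - ∑ i, (c i) * (x i)) / iota Fq r) := by
  have hdeg : r.degree = (r.natDegree : ℕ) := Polynomial.degree_eq_natDegree hr0
  rw [Ssum]
  have hset1 : {a : Polynomial Fq | a.degree < r.degree ∧ IsCoprime a r} =
      ↑((Pfin Fq r.natDegree).filter (fun a => IsCoprime a r)) := by
    ext a
    simp only [Set.mem_setOf_eq, Finset.coe_filter, mem_Pfin, hdeg]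
  have hset2 : {x : Fin n → Polynomial Fq | ∀ i, (x i).degree < r.degree} =
      ↑(PXfin Fq n r.natDegree) := by
    ext x
    simp only [Set.mem_setOf_eq, Finset.mem_coe, mem_PXfin, hdeg]
  rw [hset1, hset2, finsum_mem_coe_finset]
  exact Finset.sum_congr rfl fun a _ => finsum_mem_coe_finset _ _

section Pi
variable {ϖ : Polynomial Fq}

lemma divByMonic_mul_cancel (hm : ϖ.Monic) (v : Polynomial Fq) : (ϖ * v) /ₘ ϖ = v := by
  have := (split_rt (M := ϖ.natDegree) hm rfl (v := v) (zero_mem_Pfin _)).2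
  rwa [zero_add] at this

lemma mul_mem_Pfin_iff (hm : ϖ.Monic) {M : ℕ} {t : Polynomial Fq} :
    ϖ * t ∈ Pfin Fq (M + ϖ.natDegree) ↔ t ∈ Pfin Fq M := by
  have h0 : ϖ ≠ 0 := hm.ne_zero
  rw [mem_Pfin, mem_Pfin]
  rcases eq_or_ne t 0 with rfl | ht0
  · simp only [mul_zero, Polynomial.degree_zero]
    constructor <;> intro _ <;> exact_mod_cast WithBot.bot_lt_coe _
  · rw [Polynomial.degree_mul, Polynomial.degree_eq_natDegree h0,
      Polynomial.degree_eq_natDegree ht0]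
    constructor <;> intro hh <;> [skip; skip] <;>
    · rw [show ((ϖ.natDegree : ℕ) : WithBot ℕ) + ((t.natDegree : ℕ) : WithBot ℕ)
          = ((ϖ.natDegree + t.natDegree : ℕ) : WithBot ℕ) from by push_cast; rfl] at *
      rw [Nat.cast_lt] at *
      omega

lemma sum_dvd_reindex (hm : ϖ.Monic) (n M : ℕ) (g : (Fin n → Polynomial Fq) → ℂ) :
    ∑ u ∈ (PXfin Fq n (M + ϖ.natDegree)).filter (fun u => ∀ i, ϖ ∣ u i), g u
      = ∑ w ∈ PXfin Fq n M, g (fun i => ϖ * w i) := by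
  refine Finset.sum_nbij' (fun u => fun i => u i /ₘ ϖ) (fun w => fun i => ϖ * w i)
    ?_ ?_ ?_ ?_ ?_
  · intro u hu
    rw [Finset.mem_filter, Fintype.mem_piFinset] at hu
    rw [Fintype.mem_piFinset]
    intro i
    obtain ⟨t, ht⟩ := hu.2 i
    rw [ht, divByMonic_mul_cancel hm]
    have := hu.1 i
    rw [ht, mul_mem_Pfin_iff hm] at this
    exact this
  · intro w hw
    rw [Fintype.mem_piFinset] at hw
    rw [Finset.mem_filter, Fintype.mem_piFinset]
    exact ⟨fun i => (mul_mem_Pfin_iff hm).mpr (hw i), fun i => dvd_mul_right _ _⟩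
  · intro u hu
    rw [Finset.mem_filter] at hu
    funext i
    dsimp only
    obtain ⟨t, ht⟩ := hu.2 i
    rw [ht, divByMonic_mul_cancel hm]
  · intro w _
    funext i
    dsimp only
    rw [divByMonic_mul_cancel hm]
  · intro u hu
    rw [Finset.mem_filter] at hu
    have huu : (fun i => ϖ * ((fun u i => u i /ₘ ϖ) u i)) = u := by
      funext i
      dsimp only
      obtain ⟨t, ht⟩ := hu.2 i
      rw [ht, divByMonic_mul_cancel hm]
    dsimp only at huu ⊢
    rw [huu]

lemma prod_ortho (hm : ϖ.Monic) (hi : Irreducible ϖ) (n : ℕ) (B : Fin n → Polynomial Fq) :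
    ∑ v ∈ PXfin Fq n ϖ.natDegree, psiChar Fq (iota Fq (∑ i, B i * v i) / iota Fq ϖ)
      = if (∀ i, ϖ ∣ B i) then ((Fintype.card Fq : ℂ)) ^ (n * ϖ.natDegree) else 0 := by
  haveI := ringChar.charP Fq
  have hp0 : ringChar Fq ≠ 0 := (CharP.char_is_prime Fq _).ne_zero
  have hstep : ∀ v ∈ PXfin Fq n ϖ.natDegree,
      psiChar Fq (iota Fq (∑ i, B i * v i) / iota Fq ϖ) =
        ∏ i, psiChar Fq (iota Fq (B i * v i) / iota Fq ϖ) := by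
    intro v _
    rw [show iota Fq (∑ i, B i * v i) / iota Fq ϖ
        = ∑ i, iota Fq (B i * v i) / iota Fq ϖ from by rw [map_sum, Finset.sum_div],
      psiChar_sum hp0]
  rw [Finset.sum_congr rfl hstep, ← Finset.prod_univ_sum (fun _ => Pfin Fq ϖ.natDegree)
    (fun i y => psiChar Fq (iota Fq (B i * y) / iota Fq ϖ)),
    Finset.prod_congr rfl (fun i _ => ortho hm hi (B i))]
  by_cases hB : ∀ i, ϖ ∣ B i
  · rw [if_pos hB, Finset.prod_congr rfl (fun i (_ : i ∈ Finset.univ) => if_pos (hB i)),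
      Finset.prod_const, Finset.card_univ, Fintype.card_fin, ← pow_mul, Nat.mul_comm]
  · rw [if_neg hB]
    push_neg at hB
    obtain ⟨i₀, hi₀⟩ := hB
    exact Finset.prod_eq_zero (Finset.mem_univ i₀) (if_neg hi₀)

end Pi


section Exp
variable {ϖ : Polynomial Fq} (hϖ0 : ϖ ≠ 0)
include hϖ0

lemma iota_div_split (m : ℕ) (A S R : Polynomial Fq) :
    iota Fq (A + ϖ ^ m * S + ϖ ^ (m + 1) * R) / iota Fq (ϖ ^ (m + 1))
      = iota Fq A / iota Fq (ϖ ^ (m + 1)) + iota Fq S / iota Fq ϖ + iota Fq R := by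
  have hι : iota Fq ϖ ≠ 0 := iota_ne_zero hϖ0
  rw [map_add, map_add, map_mul, map_mul, map_pow, map_pow]
  have hιe : (iota Fq ϖ) ^ (m + 1) ≠ 0 := pow_ne_zero _ hι
  field_simp
  ring

lemma psi_div_split (hp0 : ringChar Fq ≠ 0) (m : ℕ) (A S R : Polynomial Fq) :
    psiChar Fq (iota Fq (A + ϖ ^ m * S + ϖ ^ (m + 1) * R) / iota Fq (ϖ ^ (m + 1)))
      = psiChar Fq (iota Fq A / iota Fq (ϖ ^ (m + 1))) *
          psiChar Fq (iota Fq S / iota Fq ϖ) := by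
  rw [iota_div_split hϖ0, psiChar_add hp0, psiChar_add hp0, psiChar_iota, mul_one]

lemma iota_div_cancel_pow (j m : ℕ) (A : Polynomial Fq) :
    iota Fq (ϖ ^ j * A) / iota Fq (ϖ ^ (j + m)) = iota Fq A / iota Fq (ϖ ^ m) := by
  have hι : iota Fq ϖ ≠ 0 := iota_ne_zero hϖ0
  rw [map_mul, map_pow, map_pow]
  have h1 : (iota Fq ϖ) ^ (j + m) ≠ 0 := pow_ne_zero _ hι
  have h2 : (iota Fq ϖ) ^ m ≠ 0 := pow_ne_zero _ hι
  field_simp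
  rw [map_pow]; ring

end Exp

lemma sum_form (n : ℕ) (coeffs : Fin n → Fq) (c : Fin n → Polynomial Fq)
    (a : Polynomial Fq) (x : Fin n → Polynomial Fq) :
    a * (∑ i, Polynomial.C (coeffs i) * x i ^ 3) - ∑ i, c i * x i
      = ∑ i, (a * (Polynomial.C (coeffs i) * x i ^ 3) - c i * x i) := by
  rw [Finset.mul_sum, ← Finset.sum_sub_distrib]

end Dev


set_option maxHeartbeats 1000000 in
/-- recursive structure of cubic exponential sums at high prime powers:
for `char F_q > 3`, `F(x) = a₁x₁³+⋯+aₙxₙ³` with `aᵢ ∈ F_q^×`, `ϖ` monic irreducible,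
`e ≥ 4`, and `c` with `ϖ ∣ c`: `S_{ϖ^e}(c) = 0` if `ϖ² ∤ c`, and
`S_{ϖ^e}(c) = |ϖ|^{3+2n} S_{ϖ^{e-3}}(c/ϖ²)` if `ϖ² ∣ c`. -/
theorem cubic_exponential_sum_recursion (Fq : Type*) [Field Fq] [Fintype Fq]
    (hchar : 3 < ringChar Fq) (n : ℕ) (coeffs : Fin n → Fq) (hcoeffs : ∀ i, coeffs i ≠ 0)
    (ϖ : Polynomial Fq) (hϖm : ϖ.Monic) (hϖi : Irreducible ϖ)
    (e : ℕ) (he : 4 ≤ e) (c : Fin n → Polynomial Fq) (hc : ∀ i, ϖ ∣ c i) :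
    (¬ (∀ i, ϖ ^ 2 ∣ c i) → Ssum Fq n coeffs (ϖ ^ e) c = 0) ∧
    ((∀ i, ϖ ^ 2 ∣ c i) →
      Ssum Fq n coeffs (ϖ ^ e) c =
        ((Fintype.card Fq : ℂ)) ^ ((3 + 2 * n) * ϖ.natDegree) *
          Ssum Fq n coeffs (ϖ ^ (e - 3)) (fun i => c i / ϖ ^ 2)) := by
  classical
  obtain ⟨k, rfl⟩ : ∃ k, e = k + 4 := ⟨e - 4, by omega⟩
  have he3 : k + 4 - 3 = k + 1 := by omega
  rw [he3]
  haveI := ringChar.charP Fq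
  have hp0 : ringChar Fq ≠ 0 := by omega
  have hprime : Prime ϖ := hϖi.prime
  have hd1 : 1 ≤ ϖ.natDegree := hϖi.natDegree_pos
  have hϖ0 : ϖ ≠ 0 := hϖm.ne_zero
  have h3 : (3 : Fq) ≠ 0 := by
    intro h
    have h2 := (CharP.cast_eq_zero_iff Fq (ringChar Fq) 3).mp (by exact_mod_cast h)
    have := Nat.le_of_dvd (by norm_num) h2
    omega
  have hCunit : ∀ {β : Fq}, β ≠ 0 → ¬ ϖ ∣ Polynomial.C β := by
    intro β hβ hdvd
    exact hϖi.not_isUnit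
      (isUnit_of_dvd_unit hdvd (Polynomial.isUnit_C.mpr (isUnit_iff_ne_zero.mpr hβ)))
  have h3p : ¬ ϖ ∣ (3 : Polynomial Fq) := by
    rw [show (3 : Polynomial Fq) = Polynomial.C (3 : Fq) from (map_ofNat Polynomial.C 3).symm]
    exact hCunit h3
  choose c1 hc1 using hc
  have hcond2 : ∀ i, (ϖ ∣ c1 i ↔ ϖ ^ 2 ∣ c i) := by
    intro i
    rw [hc1 i, pow_two, mul_dvd_mul_iff_left hϖ0]
  have hcop : ∀ (j : ℕ), 1 ≤ j → ∀ a : Polynomial Fq, (IsCoprime a (ϖ ^ j) ↔ ¬ ϖ ∣ a) := by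
    intro j hj a
    rw [IsCoprime.pow_right_iff (by omega), isCoprime_comm, hϖi.coprime_iff_not_dvd]
  have hcond : ∀ (a : Polynomial Fq), ¬ ϖ ∣ a → ∀ u : Fin n → Polynomial Fq,
      ((∀ i, ϖ ∣ (3 * a * Polynomial.C (coeffs i) * u i ^ 2 - c i)) ↔ (∀ i, ϖ ∣ u i)) := by
    intro a ha u
    refine forall_congr' fun i => ?_
    constructor
    · intro hdvd
      have h1 : ϖ ∣ 3 * a * Polynomial.C (coeffs i) * u i ^ 2 := by
        have := dvd_add hdvd ⟨c1 i, hc1 i⟩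
        rwa [sub_add_cancel] at this
      rcases hprime.dvd_mul.mp h1 with h2 | h2
      · rcases hprime.dvd_mul.mp h2 with h4 | h4
        · rcases hprime.dvd_mul.mp h4 with h5 | h5
          · exact absurd h5 h3p
          · exact absurd h5 ha
        · exact absurd h4 (hCunit (hcoeffs i))
      · exact hprime.dvd_of_dvd_pow h2
    · rintro ⟨t, ht⟩
      have hsq : ϖ ∣ 3 * a * Polynomial.C (coeffs i) * u i ^ 2 :=
        ⟨3 * a * Polynomial.C (coeffs i) * ϖ * t ^ 2, by rw [ht]; ring⟩
      exact dvd_sub hsq ⟨c1 i, hc1 i⟩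
  -- STAGE 1: common reduction
  have common : Ssum Fq n coeffs (ϖ ^ (k + 4)) c
      = ((Fintype.card Fq : ℂ)) ^ (n * ϖ.natDegree) *
        ∑ a ∈ (Pfin Fq ((k + 4) * ϖ.natDegree)).filter (fun a => ¬ ϖ ∣ a),
          ∑ w ∈ PXfin Fq n ((k + 2) * ϖ.natDegree),
            psiChar Fq (iota Fq (a * ϖ ^ 2 * (∑ i, Polynomial.C (coeffs i) * (w i) ^ 3)
              - ∑ i, c i * w i) / iota Fq (ϖ ^ (k + 3))) := by
    rw [Ssum_eq_finset n coeffs _ (pow_ne_zero _ hϖ0) c, Polynomial.natDegree_pow,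
      Finset.filter_congr (fun a _ => hcop (k + 4) (by omega) a)]
    have inner : ∀ a ∈ (Pfin Fq ((k + 4) * ϖ.natDegree)).filter (fun a => ¬ ϖ ∣ a),
        (∑ x ∈ PXfin Fq n ((k + 4) * ϖ.natDegree),
          psiChar Fq (iota Fq (a * (∑ i, Polynomial.C (coeffs i) * (x i) ^ 3)
            - ∑ i, c i * x i) / iota Fq (ϖ ^ (k + 4))))
        = ((Fintype.card Fq : ℂ)) ^ (n * ϖ.natDegree) *
          ∑ w ∈ PXfin Fq n ((k + 2) * ϖ.natDegree),
            psiChar Fq (iota Fq (a * ϖ ^ 2 * (∑ i, Polynomial.C (coeffs i) * (w i) ^ 3)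
              - ∑ i, c i * w i) / iota Fq (ϖ ^ (k + 3))) := by
      intro a ha
      have ha' : ¬ ϖ ∣ a := (Finset.mem_filter.mp ha).2
      rw [show (k + 4) * ϖ.natDegree = (k + 3) * ϖ.natDegree + ϖ.natDegree from by ring,
        sum_split_pi (hϖm.pow _) (by rw [Polynomial.natDegree_pow]) n _]
      have hterm : ∀ u ∈ PXfin Fq n ((k + 3) * ϖ.natDegree), ∀ v ∈ PXfin Fq n ϖ.natDegree,
          psiChar Fq (iota Fq (a * (∑ i, Polynomial.C (coeffs i) *
              (u i + ϖ ^ (k + 3) * v i) ^ 3)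
            - ∑ i, c i * (u i + ϖ ^ (k + 3) * v i)) / iota Fq (ϖ ^ (k + 4)))
          = psiChar Fq (iota Fq (a * (∑ i, Polynomial.C (coeffs i) * (u i) ^ 3)
              - ∑ i, c i * u i) / iota Fq (ϖ ^ (k + 4)))
            * psiChar Fq (iota Fq (∑ i, (3 * a * Polynomial.C (coeffs i) * (u i) ^ 2 - c i)
                * v i) / iota Fq ϖ) := by
        intro u _ v _
        have hP1 : a * (∑ i, Polynomial.C (coeffs i) * (u i + ϖ ^ (k + 3) * v i) ^ 3)
              - ∑ i, c i * (u i + ϖ ^ (k + 3) * v i)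
            = (a * (∑ i, Polynomial.C (coeffs i) * (u i) ^ 3) - ∑ i, c i * u i)
              + ϖ ^ (k + 3) * (∑ i, (3 * a * Polynomial.C (coeffs i) * (u i) ^ 2 - c i) * v i)
              + ϖ ^ (k + 3 + 1) * (∑ i, a * (Polynomial.C (coeffs i) *
                  (3 * (u i) * (v i) ^ 2 * ϖ ^ (k + 2) + (v i) ^ 3 * ϖ ^ (2 * k + 5)))) := by
          rw [sum_form n coeffs c a (fun i => u i + ϖ ^ (k + 3) * v i),
            sum_form n coeffs c a u, Finset.mul_sum, Finset.mul_sum,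
            ← Finset.sum_add_distrib, ← Finset.sum_add_distrib]
          refine Finset.sum_congr rfl fun i _ => ?_
          ring
        rw [hP1, psi_div_split hϖ0 hp0 (k + 3) _ _ _]
      rw [Finset.sum_congr rfl (fun u hu => Finset.sum_congr rfl (fun v hv => hterm u hu v hv))]
      have hvsum : ∀ u ∈ PXfin Fq n ((k + 3) * ϖ.natDegree),
          (∑ v ∈ PXfin Fq n ϖ.natDegree,
            psiChar Fq (iota Fq (a * (∑ i, Polynomial.C (coeffs i) * (u i) ^ 3)
                - ∑ i, c i * u i) / iota Fq (ϖ ^ (k + 4)))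
              * psiChar Fq (iota Fq (∑ i, (3 * a * Polynomial.C (coeffs i) * (u i) ^ 2 - c i)
                  * v i) / iota Fq ϖ))
          = if (∀ i, ϖ ∣ u i) then
              psiChar Fq (iota Fq (a * (∑ i, Polynomial.C (coeffs i) * (u i) ^ 3)
                - ∑ i, c i * u i) / iota Fq (ϖ ^ (k + 4)))
                * ((Fintype.card Fq : ℂ)) ^ (n * ϖ.natDegree)
            else 0 := by
        intro u _
        have hop := prod_ortho hϖm hϖi n
          (fun i => 3 * a * Polynomial.C (coeffs i) * (u i) ^ 2 - c i)
        rw [← Finset.mul_sum, hop, mul_ite, mul_zero]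
        exact if_congr (hcond a ha' u) rfl rfl
      rw [Finset.sum_congr rfl hvsum, ← Finset.sum_filter,
        show (k + 3) * ϖ.natDegree = (k + 2) * ϖ.natDegree + ϖ.natDegree from by ring,
        sum_dvd_reindex hϖm n ((k + 2) * ϖ.natDegree) _]
      have hw : ∀ w ∈ PXfin Fq n ((k + 2) * ϖ.natDegree),
          psiChar Fq (iota Fq (a * (∑ i, Polynomial.C (coeffs i) * (ϖ * w i) ^ 3)
            - ∑ i, c i * (ϖ * w i)) / iota Fq (ϖ ^ (k + 4)))
            * ((Fintype.card Fq : ℂ)) ^ (n * ϖ.natDegree)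
          = psiChar Fq (iota Fq (a * ϖ ^ 2 * (∑ i, Polynomial.C (coeffs i) * (w i) ^ 3)
              - ∑ i, c i * w i) / iota Fq (ϖ ^ (k + 3)))
            * ((Fintype.card Fq : ℂ)) ^ (n * ϖ.natDegree) := by
        intro w _
        have hid : a * (∑ i, Polynomial.C (coeffs i) * (ϖ * w i) ^ 3) - ∑ i, c i * (ϖ * w i)
            = ϖ ^ 1 * (a * ϖ ^ 2 * (∑ i, Polynomial.C (coeffs i) * (w i) ^ 3)
                - ∑ i, c i * w i) := by
          rw [sum_form n coeffs c a (fun i => ϖ * w i),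
            sum_form n coeffs c (a * ϖ ^ 2) w, Finset.mul_sum]
          refine Finset.sum_congr rfl fun i _ => ?_
          ring
        rw [hid, show k + 4 = 1 + (k + 3) from by omega, iota_div_cancel_pow hϖ0 1 (k + 3)]
      rw [Finset.sum_congr rfl hw, ← Finset.sum_mul, mul_comm]
    rw [Finset.sum_congr rfl inner, ← Finset.mul_sum]
  -- STAGE 2: second split
  have step5 : ∀ a : Polynomial Fq,
      (∑ w ∈ PXfin Fq n ((k + 2) * ϖ.natDegree),
        psiChar Fq (iota Fq (a * ϖ ^ 2 * (∑ i, Polynomial.C (coeffs i) * (w i) ^ 3)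
          - ∑ i, c i * w i) / iota Fq (ϖ ^ (k + 3))))
      = (if (∀ i, ϖ ^ 2 ∣ c i) then ((Fintype.card Fq : ℂ)) ^ (n * ϖ.natDegree) else 0) *
        ∑ s ∈ PXfin Fq n ((k + 1) * ϖ.natDegree),
          psiChar Fq (iota Fq (a * ϖ ^ 2 * (∑ i, Polynomial.C (coeffs i) * (s i) ^ 3)
            - ∑ i, c i * s i) / iota Fq (ϖ ^ (k + 3))) := by
    intro a
    rw [show (k + 2) * ϖ.natDegree = (k + 1) * ϖ.natDegree + ϖ.natDegree from by ring,
      sum_split_pi (hϖm.pow _) (by rw [Polynomial.natDegree_pow]) n _]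
    have hterm : ∀ s ∈ PXfin Fq n ((k + 1) * ϖ.natDegree), ∀ v ∈ PXfin Fq n ϖ.natDegree,
        psiChar Fq (iota Fq (a * ϖ ^ 2 *
            (∑ i, Polynomial.C (coeffs i) * (s i + ϖ ^ (k + 1) * v i) ^ 3)
          - ∑ i, c i * (s i + ϖ ^ (k + 1) * v i)) / iota Fq (ϖ ^ (k + 3)))
        = psiChar Fq (iota Fq (a * ϖ ^ 2 * (∑ i, Polynomial.C (coeffs i) * (s i) ^ 3)
            - ∑ i, c i * s i) / iota Fq (ϖ ^ (k + 3)))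
          * psiChar Fq (iota Fq (∑ i, (-(c1 i)) * v i) / iota Fq ϖ) := by
      intro s _ v _
      have hP2 : a * ϖ ^ 2 * (∑ i, Polynomial.C (coeffs i) * (s i + ϖ ^ (k + 1) * v i) ^ 3)
            - ∑ i, c i * (s i + ϖ ^ (k + 1) * v i)
          = (a * ϖ ^ 2 * (∑ i, Polynomial.C (coeffs i) * (s i) ^ 3) - ∑ i, c i * s i)
            + ϖ ^ (k + 2) * (∑ i, (-(c1 i)) * v i)
            + ϖ ^ (k + 2 + 1) * (∑ i, a * (Polynomial.C (coeffs i) *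
                (3 * (s i) ^ 2 * (v i) + 3 * (s i) * (v i) ^ 2 * ϖ ^ (k + 1)
                  + (v i) ^ 3 * ϖ ^ (2 * k + 2)))) := by
        rw [sum_form n coeffs c (a * ϖ ^ 2) (fun i => s i + ϖ ^ (k + 1) * v i),
          sum_form n coeffs c (a * ϖ ^ 2) s, Finset.mul_sum, Finset.mul_sum,
          ← Finset.sum_add_distrib, ← Finset.sum_add_distrib]
        refine Finset.sum_congr rfl fun i _ => ?_
        rw [hc1 i]
        ring
      rw [hP2, psi_div_split hϖ0 hp0 (k + 2) _ _ _]
    rw [Finset.sum_congr rfl (fun s hs => Finset.sum_congr rfl (fun v hv => hterm s hs v hv))]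
    have hvsum : ∀ s ∈ PXfin Fq n ((k + 1) * ϖ.natDegree),
        (∑ v ∈ PXfin Fq n ϖ.natDegree,
          psiChar Fq (iota Fq (a * ϖ ^ 2 * (∑ i, Polynomial.C (coeffs i) * (s i) ^ 3)
              - ∑ i, c i * s i) / iota Fq (ϖ ^ (k + 3)))
            * psiChar Fq (iota Fq (∑ i, (-(c1 i)) * v i) / iota Fq ϖ))
        = psiChar Fq (iota Fq (a * ϖ ^ 2 * (∑ i, Polynomial.C (coeffs i) * (s i) ^ 3)
              - ∑ i, c i * s i) / iota Fq (ϖ ^ (k + 3)))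
          * (if (∀ i, ϖ ^ 2 ∣ c i) then ((Fintype.card Fq : ℂ)) ^ (n * ϖ.natDegree) else 0) := by
      intro s _
      have hop := prod_ortho hϖm hϖi n (fun i => -(c1 i))
      have hiff : (∀ i, ϖ ∣ -(c1 i)) ↔ (∀ i, ϖ ^ 2 ∣ c i) := by
        refine forall_congr' fun i => ?_
        rw [dvd_neg, hcond2 i]
      rw [← Finset.mul_sum, hop]
      congr 1
      exact if_congr hiff rfl rfl
    rw [Finset.sum_congr rfl hvsum, ← Finset.sum_mul, mul_comm]
  refine ⟨?_, ?_⟩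
  · -- CASE 1
    intro hnc
    rw [common]
    have hz : ∀ a ∈ (Pfin Fq ((k + 4) * ϖ.natDegree)).filter (fun a => ¬ ϖ ∣ a),
        (∑ w ∈ PXfin Fq n ((k + 2) * ϖ.natDegree),
          psiChar Fq (iota Fq (a * ϖ ^ 2 * (∑ i, Polynomial.C (coeffs i) * (w i) ^ 3)
            - ∑ i, c i * w i) / iota Fq (ϖ ^ (k + 3)))) = 0 := by
      intro a _
      rw [step5 a, if_neg hnc, zero_mul]
    rw [Finset.sum_congr rfl hz, Finset.sum_const_zero, mul_zero]
  · -- CASE 2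
    intro hc2dvd
    have hc2 : ∀ i, ϖ ^ 2 * ((fun i => c i / ϖ ^ 2) i) = c i := by
      intro i
      exact EuclideanDomain.mul_div_cancel' (pow_ne_zero 2 hϖ0) (hc2dvd i)
    -- per (a, s) exponent change
    have hbase : ∀ (a : Polynomial Fq) (s : Fin n → Polynomial Fq),
        psiChar Fq (iota Fq (a * ϖ ^ 2 * (∑ i, Polynomial.C (coeffs i) * (s i) ^ 3)
          - ∑ i, c i * s i) / iota Fq (ϖ ^ (k + 3)))
        = psiChar Fq (iota Fq (a * (∑ i, Polynomial.C (coeffs i) * (s i) ^ 3)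
          - ∑ i, ((fun i => c i / ϖ ^ 2) i) * s i) / iota Fq (ϖ ^ (k + 1))) := by
      intro a s
      have hid : a * ϖ ^ 2 * (∑ i, Polynomial.C (coeffs i) * (s i) ^ 3) - ∑ i, c i * s i
          = ϖ ^ 2 * (a * (∑ i, Polynomial.C (coeffs i) * (s i) ^ 3)
            - ∑ i, ((fun i => c i / ϖ ^ 2) i) * s i) := by
        rw [sum_form n coeffs c (a * ϖ ^ 2) s,
          sum_form n coeffs (fun i => c i / ϖ ^ 2) a s, Finset.mul_sum]
        refine Finset.sum_congr rfl fun i _ => ?_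
        linear_combination s i * hc2 i
      rw [hid, show k + 3 = 2 + (k + 1) from by omega, iota_div_cancel_pow hϖ0 2 (k + 1)]
    -- a-split
    have astep : (∑ a ∈ (Pfin Fq ((k + 4) * ϖ.natDegree)).filter (fun a => ¬ ϖ ∣ a),
        ∑ s ∈ PXfin Fq n ((k + 1) * ϖ.natDegree),
          psiChar Fq (iota Fq (a * (∑ i, Polynomial.C (coeffs i) * (s i) ^ 3)
            - ∑ i, ((fun i => c i / ϖ ^ 2) i) * s i) / iota Fq (ϖ ^ (k + 1))))
        = ((Fintype.card Fq : ℂ)) ^ (3 * ϖ.natDegree) *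
          ∑ a ∈ (Pfin Fq ((k + 1) * ϖ.natDegree)).filter (fun a => ¬ ϖ ∣ a),
            ∑ s ∈ PXfin Fq n ((k + 1) * ϖ.natDegree),
              psiChar Fq (iota Fq (a * (∑ i, Polynomial.C (coeffs i) * (s i) ^ 3)
                - ∑ i, ((fun i => c i / ϖ ^ 2) i) * s i) / iota Fq (ϖ ^ (k + 1))) := by
      have key : ∀ a₀ b : Polynomial Fq,
          (if ¬ ϖ ∣ (a₀ + ϖ ^ (k + 1) * b) then
            ∑ s ∈ PXfin Fq n ((k + 1) * ϖ.natDegree),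
              psiChar Fq (iota Fq ((a₀ + ϖ ^ (k + 1) * b) *
                (∑ i, Polynomial.C (coeffs i) * (s i) ^ 3)
                - ∑ i, ((fun i => c i / ϖ ^ 2) i) * s i) / iota Fq (ϖ ^ (k + 1))) else 0)
          = (if ¬ ϖ ∣ a₀ then
            ∑ s ∈ PXfin Fq n ((k + 1) * ϖ.natDegree),
              psiChar Fq (iota Fq (a₀ * (∑ i, Polynomial.C (coeffs i) * (s i) ^ 3)
                - ∑ i, ((fun i => c i / ϖ ^ 2) i) * s i) / iota Fq (ϖ ^ (k + 1))) else 0) := by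
        intro a₀ b
        have hdvd : ϖ ∣ ϖ ^ (k + 1) * b :=
          dvd_mul_of_dvd_left (dvd_pow_self ϖ (Nat.succ_ne_zero k)) b
        have hiff : (ϖ ∣ (a₀ + ϖ ^ (k + 1) * b)) ↔ ϖ ∣ a₀ := by
          constructor
          · intro h
            have h2 := dvd_sub h hdvd
            rwa [add_sub_cancel_right] at h2
          · intro h
            exact dvd_add h hdvd
        have hG : (∑ s ∈ PXfin Fq n ((k + 1) * ϖ.natDegree),
              psiChar Fq (iota Fq ((a₀ + ϖ ^ (k + 1) * b) *
                (∑ i, Polynomial.C (coeffs i) * (s i) ^ 3)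
                - ∑ i, ((fun i => c i / ϖ ^ 2) i) * s i) / iota Fq (ϖ ^ (k + 1))))
            = ∑ s ∈ PXfin Fq n ((k + 1) * ϖ.natDegree),
              psiChar Fq (iota Fq (a₀ * (∑ i, Polynomial.C (coeffs i) * (s i) ^ 3)
                - ∑ i, ((fun i => c i / ϖ ^ 2) i) * s i) / iota Fq (ϖ ^ (k + 1))) :=
          Finset.sum_congr rfl fun s _ =>
            psiChar_div_congr hp0 (pow_ne_zero _ hϖ0)
              ⟨b * (∑ i, Polynomial.C (coeffs i) * (s i) ^ 3), by ring⟩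
        rw [hG]
        exact if_congr (not_congr hiff) rfl rfl
      rw [Finset.sum_filter,
        show (k + 4) * ϖ.natDegree = (k + 1) * ϖ.natDegree + 3 * ϖ.natDegree from by ring,
        sum_split (hϖm.pow _) (by rw [Polynomial.natDegree_pow]) _]
      have hconst : ∀ a₀ ∈ Pfin Fq ((k + 1) * ϖ.natDegree),
          (∑ b ∈ Pfin Fq (3 * ϖ.natDegree),
            (if ¬ ϖ ∣ (a₀ + ϖ ^ (k + 1) * b) then
              ∑ s ∈ PXfin Fq n ((k + 1) * ϖ.natDegree),
                psiChar Fq (iota Fq ((a₀ + ϖ ^ (k + 1) * b) *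
                  (∑ i, Polynomial.C (coeffs i) * (s i) ^ 3)
                  - ∑ i, ((fun i => c i / ϖ ^ 2) i) * s i) / iota Fq (ϖ ^ (k + 1))) else 0))
          = ((Fintype.card Fq : ℂ)) ^ (3 * ϖ.natDegree) *
            (if ¬ ϖ ∣ a₀ then
              ∑ s ∈ PXfin Fq n ((k + 1) * ϖ.natDegree),
                psiChar Fq (iota Fq (a₀ * (∑ i, Polynomial.C (coeffs i) * (s i) ^ 3)
                  - ∑ i, ((fun i => c i / ϖ ^ 2) i) * s i) / iota Fq (ϖ ^ (k + 1))) else 0) := by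
        intro a₀ _
        rw [Finset.sum_congr rfl (fun b _ => key a₀ b), Finset.sum_const, card_Pfin,
          nsmul_eq_mul, Nat.cast_pow]
      rw [Finset.sum_congr rfl hconst, ← Finset.mul_sum, ← Finset.sum_filter]
    have hSsum1 : Ssum Fq n coeffs (ϖ ^ (k + 1)) (fun i => c i / ϖ ^ 2)
        = ∑ a ∈ (Pfin Fq ((k + 1) * ϖ.natDegree)).filter (fun a => ¬ ϖ ∣ a),
            ∑ s ∈ PXfin Fq n ((k + 1) * ϖ.natDegree),
              psiChar Fq (iota Fq (a * (∑ i, Polynomial.C (coeffs i) * (s i) ^ 3)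
                - ∑ i, ((fun i => c i / ϖ ^ 2) i) * s i) / iota Fq (ϖ ^ (k + 1))) := by
      rw [Ssum_eq_finset n coeffs _ (pow_ne_zero _ hϖ0), Polynomial.natDegree_pow]
      rw [Finset.filter_congr (fun a _ => hcop (k + 1) (by omega) a)]
    rw [common]
    have hmid : ∀ a ∈ (Pfin Fq ((k + 4) * ϖ.natDegree)).filter (fun a => ¬ ϖ ∣ a),
        (∑ w ∈ PXfin Fq n ((k + 2) * ϖ.natDegree),
          psiChar Fq (iota Fq (a * ϖ ^ 2 * (∑ i, Polynomial.C (coeffs i) * (w i) ^ 3)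
            - ∑ i, c i * w i) / iota Fq (ϖ ^ (k + 3))))
        = ((Fintype.card Fq : ℂ)) ^ (n * ϖ.natDegree) *
          ∑ s ∈ PXfin Fq n ((k + 1) * ϖ.natDegree),
            psiChar Fq (iota Fq (a * (∑ i, Polynomial.C (coeffs i) * (s i) ^ 3)
              - ∑ i, ((fun i => c i / ϖ ^ 2) i) * s i) / iota Fq (ϖ ^ (k + 1))) := by
      intro a _
      rw [step5 a, if_pos hc2dvd]
      congr 1
      exact Finset.sum_congr rfl fun s _ => hbase a s
    rw [Finset.sum_congr rfl hmid, ← Finset.mul_sum, astep, ← hSsum1,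
      ← mul_assoc, ← mul_assoc, ← pow_add, ← pow_add]
    congr 2
    ring
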